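/- arXiv:1612.00804 — 5 statements merged into one kernel-verified Lean document; each statement's English description precedes it below -/
import Mathlib

section
/- Let l : ℝ^p → ℝ be differentiable, and let U ⊆ {1,…,p} and k ≥ 1. Suppose l is m-strongly concave on Ω_{|U|+k} and M̃-smooth on Ω̃_{|U|+1} (with 0 < m ≤ M̃). Then the set function f(S) = l(β^{(S)}) − l(0) is (m/M̃)-weakly submodular at (U,k): for every L ⊆ U and every S ⊆ {1,…,p} disjoint from L with |S| ≤ k, Σ_{j∈S} [f(L∪{j}) − f(L)] ≥ (m/M̃) · (f(L∪S) − f(L)). -/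
open Finset

noncomputable section

/-- Number of nonzero coordinates (the "ℓ₀ norm") of a vector. -/
def spar {p : ℕ} (v : Fin p → ℝ) : ℕ := (Finset.univ.filter fun i => v i ≠ 0).card

/-- Support of a vector, as a `Finset`. -/
def suppF {p : ℕ} (v : Fin p → ℝ) : Finset (Fin p) :=
  Finset.univ.filter fun i => v i ≠ 0

/-- `Ω_k`: pairs of `k`-sparse vectors differing in at most `k` coordinates. -/
def Omega {p : ℕ} (k : ℕ) : Set ((Fin p → ℝ) × (Fin p → ℝ)) :=
  {q | spar q.1 ≤ k ∧ spar q.2 ≤ k ∧ spar (q.1 - q.2) ≤ k}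

/-- `Ω̃_k`: pairs of `k`-sparse vectors differing in at most one coordinate. -/
def OmegaT {p : ℕ} (k : ℕ) : Set ((Fin p → ℝ) × (Fin p → ℝ)) :=
  {q | spar q.1 ≤ k ∧ spar q.2 ≤ k ∧ spar (q.1 - q.2) ≤ 1}

/-- `l` is `m`-strongly concave on `Ω`. -/
def RStrongConcaveOn {p : ℕ} (l : (Fin p → ℝ) → ℝ) (m : ℝ)
    (Ω : Set ((Fin p → ℝ) × (Fin p → ℝ))) : Prop :=
  ∀ x y : Fin p → ℝ, (x, y) ∈ Ω →
    l y - l x - fderiv ℝ l x (y - x) ≤ -(m / 2) * ∑ i, (y i - x i) ^ 2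

/-- `l` is `M`-smooth on `Ω`. -/
def RSmoothOn {p : ℕ} (l : (Fin p → ℝ) → ℝ) (M : ℝ)
    (Ω : Set ((Fin p → ℝ) × (Fin p → ℝ))) : Prop :=
  ∀ x y : Fin p → ℝ, (x, y) ∈ Ω →
    -(M / 2) * ∑ i, (y i - x i) ^ 2 ≤ l y - l x - fderiv ℝ l x (y - x)

/-!
Let `b = β L` and let `g` be the gradient of `l` at `b`; maximality of `b` on the coordinate
subspace of `L` forces `g` to vanish on `L`. Strong concavity between `b` and `β (L ∪ S)`,
after completing the square coordinatewise, gives `f (L ∪ S) - f L ≤ ∑_{j ∈ S} g_j² / (2m)`.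
Smoothness along the single-coordinate step `(g_j / M) e_j` from `b`, a vector supported in
`L ∪ {j}`, gives `g_j² / (2M) ≤ f (L ∪ {j}) - f L`. Comparing the two bounds yields the ratio `m / M`.
-/

section SparseMaximizers

variable {p : ℕ}

lemma mem_suppF {v : Fin p → ℝ} {i : Fin p} : i ∈ suppF v ↔ v i ≠ 0 := by
  simp [suppF]

lemma notMem_suppF {v : Fin p → ℝ} {i : Fin p} : i ∉ suppF v ↔ v i = 0 := by
  simp [suppF]

lemma suppF_add_subset (x y : Fin p → ℝ) : suppF (x + y) ⊆ suppF x ∪ suppF y := by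
  intro i hi
  by_contra h
  simp_all [mem_suppF]

lemma suppF_sub_subset (x y : Fin p → ℝ) : suppF (x - y) ⊆ suppF x ∪ suppF y := by
  intro i hi
  by_contra h
  simp_all [mem_suppF]

lemma suppF_single_subset (j : Fin p) (t : ℝ) : suppF (Pi.single j t) ⊆ {j} := by
  intro i hi
  by_contra h
  simp_all [mem_suppF]

lemma mem_Omega_of_suppF_subset {k : ℕ} {x y : Fin p → ℝ} {T : Finset (Fin p)}
    (hx : suppF x ⊆ T) (hy : suppF y ⊆ T) (hT : T.card ≤ k) : (x, y) ∈ Omega k :=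
  ⟨(card_le_card hx).trans hT, (card_le_card hy).trans hT,
    (card_le_card ((suppF_sub_subset x y).trans (union_subset hx hy))).trans hT⟩

lemma mem_OmegaT_of_suppF_subset {k : ℕ} {x y : Fin p → ℝ} {T : Finset (Fin p)} {j : Fin p}
    (hx : suppF x ⊆ T) (hy : suppF y ⊆ T) (hT : T.card ≤ k) (hxy : suppF (x - y) ⊆ {j}) :
    (x, y) ∈ OmegaT k :=
  ⟨(card_le_card hx).trans hT, (card_le_card hy).trans hT,
    (card_le_card hxy).trans (card_singleton j).le⟩

lemma ContinuousLinearMap.apply_single (φ : (Fin p → ℝ) →L[ℝ] ℝ) (i : Fin p) (t : ℝ) :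
    φ (Pi.single i t) = t * φ (Pi.single i 1) := by
  rw [← smul_eq_mul, ← map_smul, ← Pi.single_smul', smul_eq_mul, mul_one]

lemma ContinuousLinearMap.apply_eq_sum_mul_single (φ : (Fin p → ℝ) →L[ℝ] ℝ)
    (v : Fin p → ℝ) : φ v = ∑ i, v i * φ (Pi.single i 1) := by
  conv_lhs => rw [← univ_sum_single v]
  simp only [map_sum]
  exact sum_congr rfl fun i _ => φ.apply_single i (v i)

lemma fderiv_single_eq_zero_of_isMaxOn_suppF {l : (Fin p → ℝ) → ℝ}
    {b : Fin p → ℝ} {L : Finset (Fin p)} (hb : suppF b ⊆ L)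
    (hmax : ∀ v, suppF v ⊆ L → l v ≤ l b) {i : Fin p} (hi : i ∈ L) :
    fderiv ℝ l b (Pi.single i 1) = 0 := by
  by_cases hd : DifferentiableAt ℝ l b
  · have hloc : IsLocalMax (fun t : ℝ => l (b + t • Pi.single i 1)) 0 := by
      refine Filter.Eventually.of_forall fun t => ?_
      simp only [zero_smul, add_zero]
      refine hmax _ ((suppF_add_subset _ _).trans (union_subset hb ?_))
      rw [← Pi.single_smul', smul_eq_mul, mul_one]
      exact (suppF_single_subset i t).trans (singleton_subset_iff.2 hi)
    rw [← hd.lineDeriv_eq_fderiv]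
    exact hloc.deriv_eq_zero
  · simp [fderiv_zero_of_not_differentiableAt hd]

section GradientBounds

variable {l : (Fin p → ℝ) → ℝ} {Ω : Set ((Fin p → ℝ) × (Fin p → ℝ))}

/-- Completing the square, coordinatewise, in the strong concavity inequality; only the
coordinates in `S` contribute because the gradient vanishes on `L` and `y - x` on the rest. -/
lemma sub_le_sum_sq_div_of_rStrongConcaveOn {m : ℝ} (hm : 0 < m) (hconc : RStrongConcaveOn l m Ω)
    {x y : Fin p → ℝ} (hxy : (x, y) ∈ Ω) {L S : Finset (Fin p)}
    (hsupp : suppF (y - x) ⊆ L ∪ S) (hgrad : ∀ i ∈ L, fderiv ℝ l x (Pi.single i 1) = 0) :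
    l y - l x ≤ (∑ i ∈ S, fderiv ℝ l x (Pi.single i 1) ^ 2) / (2 * m) := by
  set g : Fin p → ℝ := fun i => fderiv ℝ l x (Pi.single i 1)
  have hlin : fderiv ℝ l x (y - x) = ∑ i ∈ S, (y i - x i) * g i := by
    rw [ContinuousLinearMap.apply_eq_sum_mul_single]
    refine (sum_subset (subset_univ S) fun i _ hiS => ?_).symm
    by_cases hiL : i ∈ L
    · simp [hgrad i hiL]
    · have : i ∉ suppF (y - x) := fun h => (mem_union.1 (hsupp h)).elim hiL hiS
      simp [notMem_suppF.1 this]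
  have hsq : ∑ i ∈ S, (y i - x i) ^ 2 ≤ ∑ i, (y i - x i) ^ 2 :=
    sum_le_sum_of_subset_of_nonneg (subset_univ S) fun i _ _ => sq_nonneg _
  have hterm : ∀ i ∈ S, (y i - x i) * g i - m / 2 * (y i - x i) ^ 2 ≤ g i ^ 2 / (2 * m) := by
    intro i _
    rw [le_div_iff₀ (by positivity)]
    nlinarith [sq_nonneg (g i - m * (y i - x i))]
  have hsum := sum_le_sum hterm
  rw [sum_sub_distrib, ← mul_sum, ← sum_div] at hsum
  have := hconc x y hxy
  nlinarith

/-- The step `g / M` along coordinate `j`, with `g` the partial derivative there,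
maximises the quadratic lower bound `t g - (M/2) t²` given by smoothness. -/
lemma sq_div_le_sub_of_rSmoothOn {M : ℝ} (hM : 0 < M) (hsmooth : RSmoothOn l M Ω)
    {x : Fin p → ℝ} {j : Fin p}
    (hxy : (x, x + Pi.single j (fderiv ℝ l x (Pi.single j 1) / M)) ∈ Ω) :
    fderiv ℝ l x (Pi.single j 1) ^ 2 / (2 * M) ≤
      l (x + Pi.single j (fderiv ℝ l x (Pi.single j 1) / M)) - l x := by
  set g := fderiv ℝ l x (Pi.single j 1)
  have h := hsmooth _ _ hxy
  have hsq : ∑ i, ((x + Pi.single j (g / M) : Fin p → ℝ) i - x i) ^ 2 = (g / M) ^ 2 := by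
    simp [Pi.single_apply]
  rw [add_sub_cancel_left, ContinuousLinearMap.apply_single, hsq] at h
  have hval : g / M * g - M / 2 * (g / M) ^ 2 = g ^ 2 / (2 * M) := by
    field_simp
    ring
  linarith

end GradientBounds

section Maximizers

variable {l : (Fin p → ℝ) → ℝ} {β : Finset (Fin p) → Fin p → ℝ}

lemma sub_le_sum_sq_div_of_maximizer (hβsupp : ∀ S, suppF (β S) ⊆ S)
    (hβmax : ∀ S v, suppF v ⊆ S → l v ≤ l (β S)) {m : ℝ} (hm : 0 < m) {K : ℕ}
    (hconc : RStrongConcaveOn l m (Omega K)) {L S : Finset (Fin p)} (hcard : (L ∪ S).card ≤ K) :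
    l (β (L ∪ S)) - l (β L) ≤
      (∑ i ∈ S, fderiv ℝ l (β L) (Pi.single i 1) ^ 2) / (2 * m) := by
  have hL : suppF (β L) ⊆ L ∪ S := (hβsupp L).trans subset_union_left
  exact sub_le_sum_sq_div_of_rStrongConcaveOn hm hconc
    (mem_Omega_of_suppF_subset hL (hβsupp _) hcard)
    ((suppF_sub_subset _ _).trans (union_subset (hβsupp _) hL))
    fun i hi => fderiv_single_eq_zero_of_isMaxOn_suppF (hβsupp L) (hβmax L) hi

lemma sq_div_le_sub_of_maximizer (hβsupp : ∀ S, suppF (β S) ⊆ S)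
    (hβmax : ∀ S v, suppF v ⊆ S → l v ≤ l (β S)) {M : ℝ} (hM : 0 < M) {K : ℕ}
    (hsmooth : RSmoothOn l M (OmegaT (K + 1))) {L : Finset (Fin p)} (hcard : L.card ≤ K)
    (j : Fin p) :
    fderiv ℝ l (β L) (Pi.single j 1) ^ 2 / (2 * M) ≤ l (β (L ∪ {j})) - l (β L) := by
  set t := fderiv ℝ l (β L) (Pi.single j 1) / M
  set y := β L + Pi.single j t
  have hL : suppF (β L) ⊆ L ∪ {j} := (hβsupp L).trans subset_union_left
  have hy : suppF y ⊆ L ∪ {j} :=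
    (suppF_add_subset _ _).trans (union_subset hL
      ((suppF_single_subset _ _).trans subset_union_right))
  have hsub : suppF (β L - y) ⊆ {j} := by
    rw [show β L - y = Pi.single j (-t) by simp [y, Pi.single_neg]]
    exact suppF_single_subset j _
  have hcard' : (L ∪ {j}).card ≤ K + 1 := (card_union_le _ _).trans (by simpa using hcard)
  have := sq_div_le_sub_of_rSmoothOn hM hsmooth (mem_OmegaT_of_suppF_subset hL hy hcard' hsub)
  linarith [hβmax _ y hy]

end Maximizers

end SparseMaximizers

theorem rsc_implies_weak_submodularity_general
    (p : ℕ) (l : (Fin p → ℝ) → ℝ)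
    (β : Finset (Fin p) → (Fin p → ℝ))
    (hβsupp : ∀ S : Finset (Fin p), suppF (β S) ⊆ S)
    (hβmax : ∀ S : Finset (Fin p), ∀ v : Fin p → ℝ, suppF v ⊆ S → l v ≤ l (β S))
    (f : Finset (Fin p) → ℝ) (hf : ∀ S, f S = l (β S) - l 0)
    (U : Finset (Fin p)) (k : ℕ)
    (m M : ℝ) (hm : 0 < m) (hmM : m ≤ M)
    (hconc : RStrongConcaveOn l m (Omega (U.card + k)))
    (hsmooth : RSmoothOn l M (OmegaT (U.card + 1))) :
    ∀ L S : Finset (Fin p), L ⊆ U → Disjoint L S → S.card ≤ k →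
      (m / M) * (f (L ∪ S) - f L) ≤ ∑ j ∈ S, (f (L ∪ {j}) - f L) := by
  intro L S hLU _ hSk
  have hM : 0 < M := hm.trans_le hmM
  set g : Fin p → ℝ := fun i => fderiv ℝ l (β L) (Pi.single i 1)
  have hf_sub : ∀ T, f T - f L = l (β T) - l (β L) := fun T => by rw [hf, hf]; ring
  have hupper : f (L ∪ S) - f L ≤ (∑ i ∈ S, g i ^ 2) / (2 * m) := by
    rw [hf_sub]
    exact sub_le_sum_sq_div_of_maximizer hβsupp hβmax hm hconc
      ((card_union_le L S).trans (add_le_add (card_le_card hLU) hSk))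
  have hlower : ∀ j ∈ S, g j ^ 2 / (2 * M) ≤ f (L ∪ {j}) - f L := fun j _ => by
    rw [hf_sub]
    exact sq_div_le_sub_of_maximizer hβsupp hβmax hM hsmooth (card_le_card hLU) j
  calc (m / M) * (f (L ∪ S) - f L) ≤ (m / M) * ((∑ i ∈ S, g i ^ 2) / (2 * m)) := by gcongr
    _ = ∑ j ∈ S, g j ^ 2 / (2 * M) := by rw [← sum_div]; field_simp
    _ ≤ ∑ j ∈ S, (f (L ∪ {j}) - f L) := sum_le_sum hlower

/-- RSC/RSM implies weak submodularity. -/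
theorem rsc_implies_weak_submodularity
    (p : ℕ) (l : (Fin p → ℝ) → ℝ) (hl : Differentiable ℝ l)
    (β : Finset (Fin p) → (Fin p → ℝ))
    (hβsupp : ∀ S : Finset (Fin p), suppF (β S) ⊆ S)
    (hβmax : ∀ S : Finset (Fin p), ∀ v : Fin p → ℝ, suppF v ⊆ S → l v ≤ l (β S))
    (f : Finset (Fin p) → ℝ) (hf : ∀ S, f S = l (β S) - l 0)
    (U : Finset (Fin p)) (k : ℕ) (hk : 1 ≤ k)
    (m M : ℝ) (hm : 0 < m) (hmM : m ≤ M)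
    (hconc : RStrongConcaveOn l m (Omega (U.card + k)))
    (hsmooth : RSmoothOn l M (OmegaT (U.card + 1))) :
    ∀ L S : Finset (Fin p), L ⊆ U → Disjoint L S → S.card ≤ k →
      (m / M) * (f (L ∪ S) - f L) ≤ ∑ j ∈ S, (f (L ∪ {j}) - f L) :=
  rsc_implies_weak_submodularity_general p l β hβsupp hβmax f hf U k m M hm hmM hconc hsmooth
end
end

section
/- Let l : ℝ^p → ℝ be differentiable and let L, S ⊆ {1,…,p} be disjoint sets. If l is M̃-smooth on Ω̃_{|L|+1} with M̃ > 0, then Σ_{j∈S} [l(β^{(L∪{j})}) − l(β^{(L)})] ≥ (1/(2M̃)) · ‖(∇l(β^{(L)}))_S‖₂². -/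
open Finset

noncomputable section

/-! For each `j ∈ S`, let `g_j` be the `j`-th partial derivative of `l` at `β L`. Moving `β L` by
`g_j / M` along `e_j` stays within `Ω̃_{|L|+1}`, and smoothness bounds the gain from below by the
vertex value `g_j² / (2M)` of the parabola `t ↦ t g_j - M t² / 2`. The moved point is supported in
`L ∪ {j}`, so `β (L ∪ {j})` gains at least as much; summing over `j` gives the claim. -/

section SingleCoordinateStep

variable {p : ℕ}

theorem suppF_add_smul_single_subset (x : Fin p → ℝ) (t : ℝ) (j : Fin p) :
    suppF (x + t • Pi.single j 1) ⊆ insert j (suppF x) := by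
  intro i hi
  rcases eq_or_ne i j with rfl | hij
  · exact mem_insert_self _ _
  · simp_all [suppF, Pi.single_apply]

theorem spar_smul_single_le_one (t : ℝ) (j : Fin p) : spar (t • Pi.single j (1 : ℝ)) ≤ 1 := by
  have hsupp : suppF (t • Pi.single j (1 : ℝ)) ⊆ {j} := by
    intro i hi
    by_contra hij
    simp_all [suppF, Pi.single_apply]
  exact (card_le_card hsupp).trans_eq (card_singleton j)

theorem mem_OmegaT_add_smul_single {k : ℕ} {x : Fin p → ℝ} (hx : spar x ≤ k) (t : ℝ)
    (j : Fin p) : (x, x + t • Pi.single j 1) ∈ OmegaT (k + 1) := by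
  refine ⟨hx.trans k.le_succ, ?_, ?_⟩
  · calc spar (x + t • Pi.single j 1) ≤ (insert j (suppF x)).card :=
          card_le_card (suppF_add_smul_single_subset x t j)
      _ ≤ spar x + 1 := card_insert_le _ _
      _ ≤ k + 1 := by omega
  · simpa [spar, suppF] using spar_smul_single_le_one (-t) j

theorem RSmoothOn.le_add_smul_single {l : (Fin p → ℝ) → ℝ} {M : ℝ} {k : ℕ}
    (hsmooth : RSmoothOn l M (OmegaT (k + 1))) {x : Fin p → ℝ} (hx : spar x ≤ k) (t : ℝ)
    (j : Fin p) :
    l x + t * fderiv ℝ l x (Pi.single j 1) - M / 2 * t ^ 2 ≤ l (x + t • Pi.single j 1) := by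
  have hstep := hsmooth x _ (mem_OmegaT_add_smul_single hx t j)
  have hsq : ∑ i, ((x + t • Pi.single j 1 : Fin p → ℝ) i - x i) ^ 2 = t ^ 2 := by
    simp [Pi.single_apply]
  rw [hsq, add_sub_cancel_left, map_smul, smul_eq_mul] at hstep
  linarith

theorem RSmoothOn.sq_fderiv_single_div_le {l : (Fin p → ℝ) → ℝ} {M : ℝ} {k : ℕ}
    (hsmooth : RSmoothOn l M (OmegaT (k + 1))) (hM : M ≠ 0) {x : Fin p → ℝ} (hx : spar x ≤ k)
    (j : Fin p) :
    (fderiv ℝ l x (Pi.single j 1)) ^ 2 / (2 * M) ≤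
      l (x + (fderiv ℝ l x (Pi.single j 1) / M) • Pi.single j 1) - l x := by
  set g := fderiv ℝ l x (Pi.single j 1)
  have hgain := hsmooth.le_add_smul_single hx (g / M) j
  have hvertex : g / M * g - M / 2 * (g / M) ^ 2 = g ^ 2 / (2 * M) := by
    field_simp
    ring
  linarith

end SingleCoordinateStep

theorem singleton_gains_lower_bound_of_smoothness_general
    (p : ℕ) (l : (Fin p → ℝ) → ℝ)
    (β : Finset (Fin p) → (Fin p → ℝ))
    (hβsupp : ∀ S : Finset (Fin p), suppF (β S) ⊆ S)
    (hβmax : ∀ S : Finset (Fin p), ∀ v : Fin p → ℝ, suppF v ⊆ S → l v ≤ l (β S))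
    (L S : Finset (Fin p))
    (M : ℝ) (hM : 0 < M)
    (hsmooth : RSmoothOn l M (OmegaT (L.card + 1))) :
    1 / (2 * M) * ∑ j ∈ S, (fderiv ℝ l (β L) (Pi.single j 1)) ^ 2 ≤
      ∑ j ∈ S, (l (β (L ∪ {j})) - l (β L)) := by
  rw [mul_sum]
  refine sum_le_sum fun j _ => ?_
  set g := fderiv ℝ l (β L) (Pi.single j 1)
  have hstep_supp : suppF (β L + (g / M) • Pi.single j 1) ⊆ L ∪ {j} := by
    refine (suppF_add_smul_single_subset _ _ j).trans ?_
    rw [union_comm, ← insert_eq]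
    exact insert_subset_insert j (hβsupp L)
  calc 1 / (2 * M) * g ^ 2 = g ^ 2 / (2 * M) := by ring
    _ ≤ l (β L + (g / M) • Pi.single j 1) - l (β L) :=
      hsmooth.sq_fderiv_single_div_le hM.ne' (card_le_card (hβsupp L)) j
    _ ≤ l (β (L ∪ {j})) - l (β L) := by linarith [hβmax _ _ hstep_supp]

/-- lower bound on the sum of singleton gains, via smoothness. -/
theorem singleton_gains_lower_bound_of_smoothness
    (p : ℕ) (l : (Fin p → ℝ) → ℝ) (hl : Differentiable ℝ l)
    (β : Finset (Fin p) → (Fin p → ℝ))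
    (hβsupp : ∀ S : Finset (Fin p), suppF (β S) ⊆ S)
    (hβmax : ∀ S : Finset (Fin p), ∀ v : Fin p → ℝ, suppF v ⊆ S → l v ≤ l (β S))
    (L S : Finset (Fin p)) (hLS : Disjoint L S)
    (M : ℝ) (hM : 0 < M)
    (hsmooth : RSmoothOn l M (OmegaT (L.card + 1))) :
    1 / (2 * M) * ∑ j ∈ S, (fderiv ℝ l (β L) (Pi.single j 1)) ^ 2 ≤
      ∑ j ∈ S, (l (β (L ∪ {j})) - l (β L)) :=
  singleton_gains_lower_bound_of_smoothness_general p l β hβsupp hβmax L S M hM hsmooth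
end
end

section
/- Let l : ℝ^p → ℝ be differentiable, l(0) the value at the zero vector, and let 1 ≤ k ≤ p. Suppose l is m₁-strongly concave and M₁-smooth on Ω₁, and M_k-smooth on Ω_k, with 0 < m₁ ≤ M₁ ≤ M_k. Then for any set S of size k, f(S) ≥ max{ 1/k , (m₁/(4M_k))·(3 + m₁/M₁) } · Σ_{j∈S} f({j}). -/
open Finset

noncomputable section

/-!
Strong concavity on `Ω₁`, applied between `0` and `β^{{j}}`, bounds each singleton gain by
completing the square: `2 m₁ f({j}) ≤ (∂ⱼ l(0))²`. Conversely, the gradient step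
`(1/M_k) ∇_S l(0)` is supported in `S`, so it is a competitor for `β^{(S)}`, and `M_k`-smoothness
on `Ω_k` gives `Σ_{j ∈ S} (∂ⱼ l(0))² ≤ 2 M_k f(S)`. Hence `f(S) ≥ (m₁/M_k) Σ_{j ∈ S} f({j})`,
and `(m₁/(4M_k))(3 + m₁/M₁) ≤ m₁/M_k`. The bound `1/k` is monotonicity: `f({j}) ≤ f(S)`.
-/

section Support

variable {p : ℕ}

lemma suppF_subset_iff {v : Fin p → ℝ} {T : Finset (Fin p)} :
    suppF v ⊆ T ↔ ∀ i ∉ T, v i = 0 := by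
  simp only [suppF, Finset.subset_iff, Finset.mem_filter, Finset.mem_univ, true_and]
  exact forall_congr' fun i => not_imp_comm

lemma sum_univ_eq_sum_of_suppF_subset {v : Fin p → ℝ} {T : Finset (Fin p)}
    (hv : suppF v ⊆ T) (φ : Fin p → ℝ → ℝ) (hφ : ∀ i, φ i 0 = 0) :
    ∑ i, φ i (v i) = ∑ i ∈ T, φ i (v i) := by
  refine (Finset.sum_subset (Finset.subset_univ T) fun i _ hi => ?_).symm
  rw [suppF_subset_iff.mp hv i hi, hφ]

lemma ContinuousLinearMap.apply_eq_sum_of_suppF_subset (L : (Fin p → ℝ) →L[ℝ] ℝ)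
    {v : Fin p → ℝ} {T : Finset (Fin p)} (hv : suppF v ⊆ T) :
    L v = ∑ i ∈ T, v i * L (Pi.single i 1) := by
  rw [← sum_univ_eq_sum_of_suppF_subset hv (fun i t => t * L (Pi.single i 1)) (by simp)]
  conv_lhs => rw [← Finset.univ_sum_single v, map_sum]
  refine Finset.sum_congr rfl fun i _ => ?_
  rw [← smul_eq_mul, ← map_smul, ← Pi.single_smul', smul_eq_mul, mul_one]

lemma zero_mem_Omega_of_suppF_subset {v : Fin p → ℝ} {T : Finset (Fin p)} {k : ℕ}
    (hv : suppF v ⊆ T) (hT : T.card ≤ k) : ((0 : Fin p → ℝ), v) ∈ Omega k := by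
  have hspar : spar v ≤ k := (Finset.card_le_card hv).trans hT
  refine ⟨by simp [spar], hspar, ?_⟩
  simpa [spar] using hspar

end Support

def gradOn {p : ℕ} (l : (Fin p → ℝ) → ℝ) (x : Fin p → ℝ) (T : Finset (Fin p)) : Fin p → ℝ :=
  fun i => if i ∈ T then fderiv ℝ l x (Pi.single i 1) else 0

lemma suppF_smul_gradOn_subset {p : ℕ} (l : (Fin p → ℝ) → ℝ) (x : Fin p → ℝ)
    (T : Finset (Fin p)) (c : ℝ) : suppF (c • gradOn l x T) ⊆ T :=
  suppF_subset_iff.mpr fun i hi => by simp [gradOn, hi]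

section Curvature

variable {p : ℕ} {l : (Fin p → ℝ) → ℝ} {Ω : Set ((Fin p → ℝ) × (Fin p → ℝ))}
  {x y : Fin p → ℝ} {T : Finset (Fin p)}

lemma RStrongConcaveOn.two_mul_sub_le_sum_sq {m : ℝ} (h : RStrongConcaveOn l m Ω) (hm : 0 < m)
    (hxy : (x, y) ∈ Ω) (hT : suppF (y - x) ⊆ T) :
    2 * m * (l y - l x) ≤ ∑ i ∈ T, fderiv ℝ l x (Pi.single i 1) ^ 2 := by
  set g := fun i => fderiv ℝ l x (Pi.single i 1)
  set d := y - x
  have hlin := (fderiv ℝ l x).apply_eq_sum_of_suppF_subset hT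
  have hsq : ∑ i, (y i - x i) ^ 2 = ∑ i ∈ T, d i ^ 2 :=
    sum_univ_eq_sum_of_suppF_subset hT (fun _ t => t ^ 2) (by simp)
  have hconc := h x y hxy
  rw [hlin, hsq] at hconc
  calc 2 * m * (l y - l x) ≤ 2 * m * ∑ i ∈ T, (d i * g i - m / 2 * d i ^ 2) := by
        rw [Finset.sum_sub_distrib, ← Finset.mul_sum]
        exact mul_le_mul_of_nonneg_left (by linarith) (by positivity)
    _ = ∑ i ∈ T, (g i ^ 2 - (g i - m * d i) ^ 2) := by
        rw [Finset.mul_sum]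
        exact Finset.sum_congr rfl fun i _ => by ring
    _ ≤ ∑ i ∈ T, g i ^ 2 := Finset.sum_le_sum fun i _ => sub_le_self _ (sq_nonneg _)

lemma RSmoothOn.sum_sq_le_two_mul_sub {M : ℝ} (h : RSmoothOn l M Ω) (hM : 0 < M)
    (hx : (x, x + M⁻¹ • gradOn l x T) ∈ Ω) :
    ∑ i ∈ T, fderiv ℝ l x (Pi.single i 1) ^ 2 ≤
      2 * M * (l (x + M⁻¹ • gradOn l x T) - l x) := by
  set g := fun i => fderiv ℝ l x (Pi.single i 1)
  set y := x + M⁻¹ • gradOn l x T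
  have hd : y - x = M⁻¹ • gradOn l x T := add_sub_cancel_left _ _
  have hT : suppF (y - x) ⊆ T := hd ▸ suppF_smul_gradOn_subset l x T M⁻¹
  have hd_apply : ∀ i ∈ T, (y - x) i = M⁻¹ * g i := fun i hi => by
    rw [hd]; simp [gradOn, hi, g]
  have hlin : fderiv ℝ l x (y - x) = M⁻¹ * ∑ i ∈ T, g i ^ 2 := by
    rw [(fderiv ℝ l x).apply_eq_sum_of_suppF_subset hT, Finset.mul_sum]
    exact Finset.sum_congr rfl fun i hi => by rw [hd_apply i hi]; ring
  have hsq : ∑ i, (y i - x i) ^ 2 = M⁻¹ ^ 2 * ∑ i ∈ T, g i ^ 2 := by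
    calc ∑ i, (y i - x i) ^ 2 = ∑ i ∈ T, (y - x) i ^ 2 :=
          sum_univ_eq_sum_of_suppF_subset hT (fun _ t => t ^ 2) (by simp)
      _ = M⁻¹ ^ 2 * ∑ i ∈ T, g i ^ 2 := by
        rw [Finset.mul_sum]
        exact Finset.sum_congr rfl fun i hi => by rw [hd_apply i hi]; ring
  have hsmooth := h x y hx
  rw [hlin, hsq] at hsmooth
  have hrearrange : 2 * M * (l y - l x) - ∑ i ∈ T, g i ^ 2 =
      2 * M * (l y - l x - M⁻¹ * ∑ i ∈ T, g i ^ 2 - -(M / 2) * (M⁻¹ ^ 2 * ∑ i ∈ T, g i ^ 2)) := by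
    field_simp
    ring
  have : 0 ≤ 2 * M * (l y - l x) - ∑ i ∈ T, g i ^ 2 := by
    rw [hrearrange]
    exact mul_nonneg (by positivity) (sub_nonneg.mpr hsmooth)
  linarith

end Curvature

lemma inv_card_mul_sum_le {ι : Type*} (S : Finset ι) (a : ι → ℝ) {c : ℝ} (hc : 0 ≤ c)
    (h : ∀ j ∈ S, a j ≤ c) : 1 / (S.card : ℝ) * ∑ j ∈ S, a j ≤ c :=
  calc 1 / (S.card : ℝ) * ∑ j ∈ S, a j ≤ (S.card : ℝ)⁻¹ * (S.card * c) := by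
        rw [one_div, ← nsmul_eq_mul]
        exact mul_le_mul_of_nonneg_left (Finset.sum_le_card_nsmul S a c h) (by positivity)
    _ = ((S.card : ℝ)⁻¹ * S.card) * c := (mul_assoc _ _ _).symm
    _ ≤ c := mul_le_of_le_one_left hc inv_mul_le_one

section Maximizers

variable {p : ℕ} {l : (Fin p → ℝ) → ℝ} {β : Finset (Fin p) → (Fin p → ℝ)}

lemma inv_card_mul_sum_singleton_gains_le
    (hβsupp : ∀ S : Finset (Fin p), suppF (β S) ⊆ S)
    (hβmax : ∀ S : Finset (Fin p), ∀ v : Fin p → ℝ, suppF v ⊆ S → l v ≤ l (β S))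
    (S : Finset (Fin p)) :
    1 / (S.card : ℝ) * ∑ j ∈ S, (l (β {j}) - l 0) ≤ l (β S) - l 0 := by
  refine inv_card_mul_sum_le S _ (sub_nonneg.mpr (hβmax S 0 (by simp [suppF]))) fun j hj => ?_
  exact sub_le_sub_right (hβmax S _ ((hβsupp {j}).trans (singleton_subset_iff.mpr hj))) _

lemma div_mul_sum_singleton_gains_le {m M : ℝ} (hm : 0 < m) (hM : 0 < M)
    (hβsupp : ∀ S : Finset (Fin p), suppF (β S) ⊆ S)
    (hβmax : ∀ S : Finset (Fin p), ∀ v : Fin p → ℝ, suppF v ⊆ S → l v ≤ l (β S))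
    (hconc : RStrongConcaveOn l m (Omega 1)) {S : Finset (Fin p)}
    (hsmooth : RSmoothOn l M (Omega S.card)) :
    m / M * ∑ j ∈ S, (l (β {j}) - l 0) ≤ l (β S) - l 0 := by
  set g := fun j => fderiv ℝ l 0 (Pi.single j 1)
  have hsingleton : ∀ j, 2 * m * (l (β {j}) - l 0) ≤ g j ^ 2 := fun j => by
    simpa using hconc.two_mul_sub_le_sum_sq hm
      (zero_mem_Omega_of_suppF_subset (hβsupp {j}) (by simp)) (T := {j})
      (by rw [sub_zero]; exact hβsupp {j})
  have hstep := suppF_smul_gradOn_subset l 0 S M⁻¹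
  have hset : ∑ j ∈ S, g j ^ 2 ≤ 2 * M * (l (β S) - l 0) := by
    have hgrad := hsmooth.sum_sq_le_two_mul_sub hM (x := 0) (T := S)
      (by rw [zero_add]; exact zero_mem_Omega_of_suppF_subset hstep le_rfl)
    rw [zero_add] at hgrad
    nlinarith [hβmax S _ hstep]
  rw [div_mul_eq_mul_div, div_le_iff₀ hM]
  nlinarith [Finset.mul_sum S (fun j => l (β {j}) - l 0) (2 * m),
    Finset.sum_le_sum fun j (_ : j ∈ S) => hsingleton j]

end Maximizers

theorem set_value_vs_sum_of_singletons_general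
    (p : ℕ) (l : (Fin p → ℝ) → ℝ)
    (β : Finset (Fin p) → (Fin p → ℝ))
    (hβsupp : ∀ S : Finset (Fin p), suppF (β S) ⊆ S)
    (hβmax : ∀ S : Finset (Fin p), ∀ v : Fin p → ℝ, suppF v ⊆ S → l v ≤ l (β S))
    (f : Finset (Fin p) → ℝ) (hf : ∀ S, f S = l (β S) - l 0)
    (k : ℕ)
    (m₁ M₁ Mk : ℝ) (hm₁ : 0 < m₁) (hm₁M₁ : m₁ ≤ M₁) (hM₁Mk : M₁ ≤ Mk)
    (hconc1 : RStrongConcaveOn l m₁ (Omega 1))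
    (hsmoothk : RSmoothOn l Mk (Omega k)) :
    ∀ S : Finset (Fin p), S.card = k →
      max (1 / (k : ℝ)) (m₁ / (4 * Mk) * (3 + m₁ / M₁)) * ∑ j ∈ S, f {j} ≤ f S := by
  rintro S rfl
  have hM₁ : 0 < M₁ := hm₁.trans_le hm₁M₁
  have hMk : 0 < Mk := hM₁.trans_le hM₁Mk
  have hcoef : m₁ / (4 * Mk) * (3 + m₁ / M₁) ≤ m₁ / Mk := by
    have : m₁ / M₁ ≤ 1 := (div_le_one hM₁).mpr hm₁M₁
    calc m₁ / (4 * Mk) * (3 + m₁ / M₁) ≤ m₁ / (4 * Mk) * 4 := by gcongr; linarith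
      _ = m₁ / Mk := by field_simp
  have hsum_nonneg : 0 ≤ ∑ j ∈ S, f {j} :=
    Finset.sum_nonneg fun j _ => (hf {j}).symm ▸ sub_nonneg.mpr (hβmax {j} 0 (by simp [suppF]))
  rw [max_mul_of_nonneg _ _ hsum_nonneg]
  simp only [hf] at hsum_nonneg ⊢
  exact max_le (inv_card_mul_sum_singleton_gains_le hβsupp hβmax S)
    ((mul_le_mul_of_nonneg_right hcoef hsum_nonneg).trans
      (div_mul_sum_singleton_gains_le hm₁ hMk hβsupp hβmax hconc1 hsmoothk))

/-- the value of a `k`-set dominates a fraction of the sum of singleton values. -/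
theorem set_value_vs_sum_of_singletons
    (p : ℕ) (l : (Fin p → ℝ) → ℝ) (hl : Differentiable ℝ l)
    (β : Finset (Fin p) → (Fin p → ℝ))
    (hβsupp : ∀ S : Finset (Fin p), suppF (β S) ⊆ S)
    (hβmax : ∀ S : Finset (Fin p), ∀ v : Fin p → ℝ, suppF v ⊆ S → l v ≤ l (β S))
    (f : Finset (Fin p) → ℝ) (hf : ∀ S, f S = l (β S) - l 0)
    (k : ℕ) (hk1 : 1 ≤ k) (hkp : k ≤ p)
    (m₁ M₁ Mk : ℝ) (hm₁ : 0 < m₁) (hm₁M₁ : m₁ ≤ M₁) (hM₁Mk : M₁ ≤ Mk)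
    (hconc1 : RStrongConcaveOn l m₁ (Omega 1))
    (hsmooth1 : RSmoothOn l M₁ (Omega 1))
    (hsmoothk : RSmoothOn l Mk (Omega k)) :
    ∀ S : Finset (Fin p), S.card = k →
      max (1 / (k : ℝ)) (m₁ / (4 * Mk) * (3 + m₁ / M₁)) * ∑ j ∈ S, f {j} ≤ f S :=
  set_value_vs_sum_of_singletons_general p l β hβsupp hβmax f hf k m₁ M₁ Mk hm₁ hm₁M₁ hM₁Mk hconc1
    hsmoothk
end
end

section
/- (Oblivious algorithm guarantee.) Let l : ℝ^p → ℝ be differentiable, m_k-strongly concave and M_k-smooth on Ω_k, and m₁-strongly concave and M₁-smooth on Ω₁, with 0 < m_k ≤ m₁ ≤ M₁ ≤ M_k. Let S^{OBL} be a set of k indices maximizing Σ_{j∈S} f({j}) over all sets S of size k (the top-k singleton values), and let S* be a set of size k maximizing f. Then f(S^{OBL}) ≥ max{ m_k/(k·M₁) , (m_k·m₁/(4·M_k·M₁))·(3 + m₁/M₁) } · f(S*). -/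
open Finset

noncomputable section

/-! Strong concavity and smoothness on `Ω_K`, maximized coordinatewise around `0`, sandwich the
set function between modular ones: `m f(S) ≤ ∑_{j ∈ S} (∂ⱼl(0))² / 2 ≤ M f(S)` whenever
`|S| ≤ K`. Applied to `S*` and to singletons this gives
`m_k f(S*) ≤ M₁ ∑_{j ∈ S*} f{j} ≤ M₁ ∑_{j ∈ S^OBL} f{j}`. The last sum is at most `k f(S^OBL)` by
monotonicity of `f`, and at most `(M_k / m₁) f(S^OBL)` by the sandwich again; finally
`(3 + m₁/M₁) / 4 ≤ 1`. -/

variable {p : ℕ}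

lemma spar_le_card_of_suppF_subset {v : Fin p → ℝ} {S : Finset (Fin p)} (hv : suppF v ⊆ S) :
    spar v ≤ S.card :=
  card_le_card hv

lemma zero_mem_Omega {K : ℕ} {v : Fin p → ℝ} (hv : spar v ≤ K) :
    ((0 : Fin p → ℝ), v) ∈ Omega K := by
  refine ⟨by simp [spar], hv, ?_⟩
  simpa [spar] using hv

def coordGrad (l : (Fin p → ℝ) → ℝ) (x : Fin p → ℝ) (j : Fin p) : ℝ :=
  fderiv ℝ l x (Pi.single j 1)

lemma fderiv_apply_eq_sum_coordGrad (l : (Fin p → ℝ) → ℝ) (x v : Fin p → ℝ) :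
    fderiv ℝ l x v = ∑ j, v j * coordGrad l x j := by
  conv_lhs => rw [← univ_sum_single v]
  rw [map_sum]
  refine sum_congr rfl fun j _ => ?_
  rw [coordGrad, ← smul_eq_mul, ← map_smul, ← Pi.single_smul', smul_eq_mul, mul_one]

lemma RStrongConcaveOn.sub_le_sum {l : (Fin p → ℝ) → ℝ} {m : ℝ} {K : ℕ}
    (hl : RStrongConcaveOn l m (Omega K)) {v : Fin p → ℝ} (hv : spar v ≤ K) :
    l v - l 0 ≤ ∑ j, (v j * coordGrad l 0 j - m / 2 * v j ^ 2) := by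
  have h := hl 0 v (zero_mem_Omega hv)
  simp only [sub_zero, Pi.zero_apply, fderiv_apply_eq_sum_coordGrad] at h
  rw [sum_sub_distrib, ← mul_sum]
  linarith

lemma RSmoothOn.sum_le_sub {l : (Fin p → ℝ) → ℝ} {M : ℝ} {K : ℕ}
    (hl : RSmoothOn l M (Omega K)) {v : Fin p → ℝ} (hv : spar v ≤ K) :
    ∑ j, (v j * coordGrad l 0 j - M / 2 * v j ^ 2) ≤ l v - l 0 := by
  have h := hl 0 v (zero_mem_Omega hv)
  simp only [sub_zero, Pi.zero_apply, fderiv_apply_eq_sum_coordGrad] at h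
  rw [sum_sub_distrib, ← mul_sum]
  linarith

lemma eq_zero_of_suppF_subset {v : Fin p → ℝ} {S : Finset (Fin p)} (hv : suppF v ⊆ S) {j : Fin p}
    (hj : j ∉ S) : v j = 0 := by
  by_contra h
  exact hj (hv (by simpa [suppF] using h))

theorem RStrongConcaveOn.mul_sub_le_sum_sq {l : (Fin p → ℝ) → ℝ} {m : ℝ} {K : ℕ}
    (hl : RStrongConcaveOn l m (Omega K)) (hm : 0 < m) {S : Finset (Fin p)} (hS : S.card ≤ K)
    {v : Fin p → ℝ} (hv : suppF v ⊆ S) :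
    m * (l v - l 0) ≤ ∑ j ∈ S, coordGrad l 0 j ^ 2 / 2 := by
  have h := hl.sub_le_sum ((spar_le_card_of_suppF_subset hv).trans hS)
  rw [← sum_subset (subset_univ S) fun j _ hj => by simp [eq_zero_of_suppF_subset hv hj]] at h
  calc m * (l v - l 0) ≤ ∑ j ∈ S, m * (v j * coordGrad l 0 j - m / 2 * v j ^ 2) := by
        rw [← mul_sum]; exact mul_le_mul_of_nonneg_left h hm.le
    _ ≤ ∑ j ∈ S, coordGrad l 0 j ^ 2 / 2 :=
        sum_le_sum fun j _ => by nlinarith [sq_nonneg (m * v j - coordGrad l 0 j)]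

theorem RSmoothOn.exists_sum_sq_le_mul_sub {l : (Fin p → ℝ) → ℝ} {M : ℝ} {K : ℕ}
    (hl : RSmoothOn l M (Omega K)) (hM : 0 < M) {S : Finset (Fin p)} (hS : S.card ≤ K) :
    ∃ v, suppF v ⊆ S ∧ ∑ j ∈ S, coordGrad l 0 j ^ 2 / 2 ≤ M * (l v - l 0) := by
  set v : Fin p → ℝ := fun j => if j ∈ S then coordGrad l 0 j / M else 0
  have hv : suppF v ⊆ S := fun j hj => by
    by_contra h
    simp [suppF, v, h] at hj
  refine ⟨v, hv, ?_⟩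
  have h := hl.sum_le_sub ((spar_le_card_of_suppF_subset hv).trans hS)
  rw [← sum_subset (subset_univ S) fun j _ hj => by simp [eq_zero_of_suppF_subset hv hj]] at h
  calc ∑ j ∈ S, coordGrad l 0 j ^ 2 / 2
      = ∑ j ∈ S, M * (v j * coordGrad l 0 j - M / 2 * v j ^ 2) :=
        sum_congr rfl fun j hj => by simp only [v, if_pos hj]; field_simp; ring
    _ ≤ M * (l v - l 0) := by rw [← mul_sum]; exact mul_le_mul_of_nonneg_left h hM.le

def IsRestrictedMaximizer (l : (Fin p → ℝ) → ℝ) (β : Finset (Fin p) → Fin p → ℝ) : Prop :=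
  (∀ S, suppF (β S) ⊆ S) ∧ ∀ S v, suppF v ⊆ S → l v ≤ l (β S)

def sparseGain (l : (Fin p → ℝ) → ℝ) (β : Finset (Fin p) → Fin p → ℝ) (S : Finset (Fin p)) : ℝ :=
  l (β S) - l 0

namespace IsRestrictedMaximizer

variable {l : (Fin p → ℝ) → ℝ} {β : Finset (Fin p) → Fin p → ℝ}

lemma sparseGain_nonneg (hβ : IsRestrictedMaximizer l β) (S : Finset (Fin p)) :
    0 ≤ sparseGain l β S :=
  sub_nonneg.2 (hβ.2 S 0 (by simp [suppF]))

lemma monotone_sparseGain (hβ : IsRestrictedMaximizer l β) : Monotone (sparseGain l β) :=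
  fun S T hST => sub_le_sub_right (hβ.2 T (β S) ((hβ.1 S).trans hST)) _

lemma sum_sparseGain_singleton_le (hβ : IsRestrictedMaximizer l β) (S : Finset (Fin p)) :
    ∑ j ∈ S, sparseGain l β {j} ≤ S.card * sparseGain l β S := by
  rw [← nsmul_eq_mul]
  exact sum_le_card_nsmul _ _ _ fun j hj =>
    hβ.monotone_sparseGain (singleton_subset_iff.2 hj)

lemma mul_sparseGain_le_sum_sq (hβ : IsRestrictedMaximizer l β) {m : ℝ} {K : ℕ}
    (hl : RStrongConcaveOn l m (Omega K)) (hm : 0 < m) {S : Finset (Fin p)} (hS : S.card ≤ K) :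
    m * sparseGain l β S ≤ ∑ j ∈ S, coordGrad l 0 j ^ 2 / 2 :=
  hl.mul_sub_le_sum_sq hm hS (hβ.1 S)

lemma sum_sq_le_mul_sparseGain (hβ : IsRestrictedMaximizer l β) {M : ℝ} {K : ℕ}
    (hl : RSmoothOn l M (Omega K)) (hM : 0 < M) {S : Finset (Fin p)} (hS : S.card ≤ K) :
    ∑ j ∈ S, coordGrad l 0 j ^ 2 / 2 ≤ M * sparseGain l β S := by
  obtain ⟨v, hv, hle⟩ := hl.exists_sum_sq_le_mul_sub hM hS
  exact hle.trans (mul_le_mul_of_nonneg_left (sub_le_sub_right (hβ.2 S v hv) _) hM.le)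

theorem mul_sparseGain_le_mul_sum_singleton (hβ : IsRestrictedMaximizer l β)
    {m M : ℝ} {K : ℕ} (hm : 0 < m) (hM : 0 < M) (hconc : RStrongConcaveOn l m (Omega K))
    (hsmooth : RSmoothOn l M (Omega 1)) {S : Finset (Fin p)} (hS : S.card ≤ K) :
    m * sparseGain l β S ≤ M * ∑ j ∈ S, sparseGain l β {j} := by
  calc m * sparseGain l β S ≤ ∑ j ∈ S, coordGrad l 0 j ^ 2 / 2 :=
        hβ.mul_sparseGain_le_sum_sq hconc hm hS
    _ ≤ M * ∑ j ∈ S, sparseGain l β {j} := by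
        rw [mul_sum]
        exact sum_le_sum fun j _ => by
          simpa using hβ.sum_sq_le_mul_sparseGain hsmooth hM (S := {j}) (by simp)

theorem mul_sum_singleton_le_mul_sparseGain (hβ : IsRestrictedMaximizer l β)
    {m M : ℝ} {K : ℕ} (hm : 0 < m) (hM : 0 < M) (hconc : RStrongConcaveOn l m (Omega 1))
    (hsmooth : RSmoothOn l M (Omega K)) {S : Finset (Fin p)} (hS : S.card ≤ K) :
    m * ∑ j ∈ S, sparseGain l β {j} ≤ M * sparseGain l β S := by
  calc m * ∑ j ∈ S, sparseGain l β {j} ≤ ∑ j ∈ S, coordGrad l 0 j ^ 2 / 2 := by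
        rw [mul_sum]
        exact sum_le_sum fun j _ => by
          simpa using hβ.mul_sparseGain_le_sum_sq hconc hm (S := {j}) (by simp)
    _ ≤ M * sparseGain l β S := hβ.sum_sq_le_mul_sparseGain hsmooth hM hS

end IsRestrictedMaximizer

lemma div_mul_le_of_mul_le_mul {a b x y : ℝ} (hb : 0 ≤ b) (hy : 0 ≤ y) (h : a * x ≤ b * y) :
    a / b * x ≤ y := by
  rw [div_mul_eq_mul_div]
  exact div_le_of_le_mul₀ hb hy (by linarith)

theorem oblivious_guarantee_general
    (p : ℕ) (l : (Fin p → ℝ) → ℝ)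
    (β : Finset (Fin p) → (Fin p → ℝ))
    (hβsupp : ∀ S : Finset (Fin p), suppF (β S) ⊆ S)
    (hβmax : ∀ S : Finset (Fin p), ∀ v : Fin p → ℝ, suppF v ⊆ S → l v ≤ l (β S))
    (f : Finset (Fin p) → ℝ) (hf : ∀ S, f S = l (β S) - l 0)
    (k : ℕ)
    (mk m₁ M₁ Mk : ℝ) (hmk : 0 < mk) (hmkm₁ : mk ≤ m₁) (hm₁M₁ : m₁ ≤ M₁) (hM₁Mk : M₁ ≤ Mk)
    (hconck : RStrongConcaveOn l mk (Omega k))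
    (hsmoothk : RSmoothOn l Mk (Omega k))
    (hconc1 : RStrongConcaveOn l m₁ (Omega 1))
    (hsmooth1 : RSmoothOn l M₁ (Omega 1))
    (SOBL : Finset (Fin p)) (hSOBLcard : SOBL.card = k)
    (hSOBL : ∀ T : Finset (Fin p), T.card = k → ∑ j ∈ T, f {j} ≤ ∑ j ∈ SOBL, f {j})
    (Sstar : Finset (Fin p)) (hSstarcard : Sstar.card = k) :
    max (mk / ((k : ℝ) * M₁)) (mk * m₁ / (4 * Mk * M₁) * (3 + m₁ / M₁)) * f Sstar ≤
      f SOBL := by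
  obtain rfl : f = sparseGain l β := funext hf
  have hβ : IsRestrictedMaximizer l β := ⟨hβsupp, hβmax⟩
  have hm₁ : 0 < m₁ := hmk.trans_le hmkm₁
  have hM₁ : 0 < M₁ := hm₁.trans_le hm₁M₁
  have hMk : 0 < Mk := hM₁.trans_le hM₁Mk
  have hstar : mk * sparseGain l β Sstar ≤ M₁ * ∑ j ∈ SOBL, sparseGain l β {j} :=
    (hβ.mul_sparseGain_le_mul_sum_singleton hmk hM₁ hconck hsmooth1 hSstarcard.le).trans
      (mul_le_mul_of_nonneg_left (hSOBL Sstar hSstarcard) hM₁.le)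
  have hbound₁ : mk / (k * M₁) * sparseGain l β Sstar ≤ sparseGain l β SOBL := by
    refine div_mul_le_of_mul_le_mul (by positivity) (hβ.sparseGain_nonneg _) ?_
    have hsum := hβ.sum_sparseGain_singleton_le SOBL
    rw [hSOBLcard] at hsum
    linarith [mul_le_mul_of_nonneg_left hsum hM₁.le]
  have hbound₂ : mk * m₁ / (Mk * M₁) * sparseGain l β Sstar ≤ sparseGain l β SOBL := by
    refine div_mul_le_of_mul_le_mul (by positivity) (hβ.sparseGain_nonneg _) ?_
    have hsum := hβ.mul_sum_singleton_le_mul_sparseGain hm₁ hMk hconc1 hsmoothk hSOBLcard.le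
    linarith [mul_le_mul_of_nonneg_left hstar hm₁.le, mul_le_mul_of_nonneg_left hsum hM₁.le]
  have hcoeff : mk * m₁ / (4 * Mk * M₁) * (3 + m₁ / M₁) ≤ mk * m₁ / (Mk * M₁) := by
    have : m₁ / M₁ ≤ 1 := div_le_one_of_le₀ hm₁M₁ hM₁.le
    rw [show mk * m₁ / (4 * Mk * M₁) = mk * m₁ / (Mk * M₁) / 4 by field_simp]
    nlinarith [show 0 ≤ mk * m₁ / (Mk * M₁) by positivity]
  rw [max_mul_of_nonneg _ _ (hβ.sparseGain_nonneg _)]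
  exact max_le hbound₁ ((mul_le_mul_of_nonneg_right hcoeff (hβ.sparseGain_nonneg _)).trans hbound₂)

/-- Oblivious algorithm guarantee. -/
theorem oblivious_guarantee
    (p : ℕ) (l : (Fin p → ℝ) → ℝ) (hl : Differentiable ℝ l)
    (β : Finset (Fin p) → (Fin p → ℝ))
    (hβsupp : ∀ S : Finset (Fin p), suppF (β S) ⊆ S)
    (hβmax : ∀ S : Finset (Fin p), ∀ v : Fin p → ℝ, suppF v ⊆ S → l v ≤ l (β S))
    (f : Finset (Fin p) → ℝ) (hf : ∀ S, f S = l (β S) - l 0)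
    (k : ℕ)
    (mk m₁ M₁ Mk : ℝ) (hmk : 0 < mk) (hmkm₁ : mk ≤ m₁) (hm₁M₁ : m₁ ≤ M₁) (hM₁Mk : M₁ ≤ Mk)
    (hconck : RStrongConcaveOn l mk (Omega k))
    (hsmoothk : RSmoothOn l Mk (Omega k))
    (hconc1 : RStrongConcaveOn l m₁ (Omega 1))
    (hsmooth1 : RSmoothOn l M₁ (Omega 1))
    (SOBL : Finset (Fin p)) (hSOBLcard : SOBL.card = k)
    (hSOBL : ∀ T : Finset (Fin p), T.card = k → ∑ j ∈ T, f {j} ≤ ∑ j ∈ SOBL, f {j})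
    (Sstar : Finset (Fin p)) (hSstarcard : Sstar.card = k)
    (hSstar : ∀ T : Finset (Fin p), T.card = k → f T ≤ f Sstar) :
    max (mk / ((k : ℝ) * M₁)) (mk * m₁ / (4 * Mk * M₁) * (3 + m₁ / M₁)) * f Sstar ≤
      f SOBL :=
  oblivious_guarantee_general p l β hβsupp hβmax f hf k mk m₁ M₁ Mk hmk hmkm₁ hm₁M₁ hM₁Mk hconck
    hsmoothk hconc1 hsmooth1 SOBL hSOBLcard hSOBL Sstar hSstarcard
end
end

section
/- (Greedy can be arbitrarily bad for linear regression R².) Fix 0 < z < 1/2 and, in ℝ³, let y = (1,0,0), x₁ = (0,1,0), x₂ = (z, √(1−z²), 0), x₃ = (2z, 0, √(1−4z²)). Then: (i) the squared norm of the orthogonal projection of y onto the span of {x₂, x₃} equals (5z² − 8z⁴)/(1 − 4z⁴), which tends to 0 as z → 0⁺; and (ii) y = −(√(1−z²)/z)·x₁ + (1/z)·x₂, so the orthogonal projection of y onto the span of {x₁, x₂} is y itself (the corresponding R² equals 1). Moreover the greedy first step picks x₃, since ⟨y,x₁⟩² = 0, ⟨y,x₂⟩² = z², and ⟨y,x₃⟩²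 = 4z². -/
/-!
Projecting `y` onto `span {u, v}` amounts to solving the 2 × 2 Gram system; with Gram determinant
`G = ‖u‖²‖v‖² - ⟪u, v⟫²` this gives
`‖P y‖² = (‖v‖²⟪y, u⟫² + ‖u‖²⟪y, v⟫² - 2⟪u, v⟫⟪y, u⟫⟪y, v⟫) / G`.
For the unit vectors `x₂, x₃` we have `⟪x₂, x₃⟫ = 2z²`, `⟪y, x₂⟫ = z`, `⟪y, x₃⟫ = 2z`, whence
`(5z² - 8z⁴) / (1 - 4z⁴)`; on the other hand `y` already lies in `span {x₁, x₂}`.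
-/

open Real

section SpanPair

variable {E : Type*} [NormedAddCommGroup E] [InnerProductSpace ℝ E]

open RealInnerProductSpace

theorem Submodule.starProjection_span_pair {u v : E}
    [(span ℝ {u, v}).HasOrthogonalProjection] (y : E) (hG : ‖u‖ ^ 2 * ‖v‖ ^ 2 - ⟪u, v⟫ ^ 2 ≠ 0) :
    (span ℝ {u, v}).starProjection y =
      ((‖v‖ ^ 2 * ⟪y, u⟫ - ⟪u, v⟫ * ⟪y, v⟫) / (‖u‖ ^ 2 * ‖v‖ ^ 2 - ⟪u, v⟫ ^ 2)) • u +
      ((‖u‖ ^ 2 * ⟪y, v⟫ - ⟪u, v⟫ * ⟪y, u⟫) / (‖u‖ ^ 2 * ‖v‖ ^ 2 - ⟪u, v⟫ ^ 2)) • v := by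
  refine eq_starProjection_of_mem_of_inner_eq_zero (mem_span_pair.mpr ⟨_, _, rfl⟩) ?_
  rintro w hw
  obtain ⟨α, β, rfl⟩ := mem_span_pair.mp hw
  set G := ‖u‖ ^ 2 * ‖v‖ ^ 2 - ⟪u, v⟫ ^ 2 with hG_def
  simp only [inner_add_right, inner_sub_left, inner_add_left, real_inner_smul_left,
    real_inner_smul_right, real_inner_self_eq_norm_sq, real_inner_comm u v]
  field_simp
  rw [hG_def]
  ring

theorem Submodule.norm_sq_starProjection_span_pair {u v : E}
    [(span ℝ {u, v}).HasOrthogonalProjection] (y : E) (hG : ‖u‖ ^ 2 * ‖v‖ ^ 2 - ⟪u, v⟫ ^ 2 ≠ 0) :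
    ‖(span ℝ {u, v}).starProjection y‖ ^ 2 =
      (‖v‖ ^ 2 * ⟪y, u⟫ ^ 2 + ‖u‖ ^ 2 * ⟪y, v⟫ ^ 2 - 2 * ⟪u, v⟫ * ⟪y, u⟫ * ⟪y, v⟫) /
        (‖u‖ ^ 2 * ‖v‖ ^ 2 - ⟪u, v⟫ ^ 2) := by
  have hself :
      ‖(span ℝ {u, v}).starProjection y‖ ^ 2 = ⟪(span ℝ {u, v}).starProjection y, y⟫ := by
    rw [← real_inner_self_eq_norm_sq, inner_starProjection_left_eq_right,
      starProjection_eq_self_iff.mpr (starProjection_apply_mem _ y), real_inner_comm]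
  rw [hself, starProjection_span_pair y hG]
  set G := ‖u‖ ^ 2 * ‖v‖ ^ 2 - ⟪u, v⟫ ^ 2
  rw [inner_add_left, real_inner_smul_left, real_inner_smul_left, real_inner_comm y u,
    real_inner_comm y v]
  field_simp
  ring

end SpanPair

theorem EuclideanSpace.inner_toLp_fin3 (a₀ a₁ a₂ b₀ b₁ b₂ : ℝ) :
    inner ℝ (WithLp.toLp 2 ![a₀, a₁, a₂]) (WithLp.toLp 2 ![b₀, b₁, b₂]) =
      a₀ * b₀ + a₁ * b₁ + a₂ * b₂ := by
  simp [PiLp.inner_apply, Fin.sum_univ_three]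
  ring

/-- greedy can be arbitrarily bad for linear regression `R²`. -/
theorem greedy_bad_for_R2
    (z : ℝ) (hz0 : 0 < z) (hz : z < 1 / 2)
    (y x1 x2 x3 : EuclideanSpace ℝ (Fin 3))
    (hy : y = WithLp.toLp 2 ![1, 0, 0]) (hx1 : x1 = WithLp.toLp 2 ![0, 1, 0])
    (hx2 : x2 = WithLp.toLp 2 ![z, Real.sqrt (1 - z ^ 2), 0])
    (hx3 : x3 = WithLp.toLp 2 ![2 * z, 0, Real.sqrt (1 - 4 * z ^ 2)]) :
    ‖(Submodule.orthogonalProjection (Submodule.span ℝ {x2, x3}) y : EuclideanSpace ℝ (Fin 3))‖ ^ 2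
        = (5 * z ^ 2 - 8 * z ^ 4) / (1 - 4 * z ^ 4) ∧
      Filter.Tendsto (fun w : ℝ => (5 * w ^ 2 - 8 * w ^ 4) / (1 - 4 * w ^ 4))
        (nhdsWithin 0 (Set.Ioi 0)) (nhds 0) ∧
      y = (-(Real.sqrt (1 - z ^ 2) / z)) • x1 + (1 / z) • x2 ∧
      (Submodule.orthogonalProjection (Submodule.span ℝ {x1, x2}) y : EuclideanSpace ℝ (Fin 3)) = y ∧
      (inner ℝ y x1 : ℝ) ^ 2 = 0 ∧ (inner ℝ y x2 : ℝ) ^ 2 = z ^ 2 ∧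
      (inner ℝ y x3 : ℝ) ^ 2 = 4 * z ^ 2 := by
  subst hy hx1 hx2 hx3
  have hs : √(1 - z ^ 2) ^ 2 = 1 - z ^ 2 := sq_sqrt (by nlinarith)
  have ht : √(1 - 4 * z ^ 2) ^ 2 = 1 - 4 * z ^ 2 := sq_sqrt (by nlinarith)
  have hcomb : WithLp.toLp 2 ![1, 0, 0] = (-(√(1 - z ^ 2) / z)) • WithLp.toLp 2 ![0, 1, 0] +
      (1 / z) • WithLp.toLp 2 ![z, √(1 - z ^ 2), 0] := by
    ext i
    fin_cases i <;> simp [field]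
  have hnorm2 : ‖WithLp.toLp 2 ![z, √(1 - z ^ 2), 0]‖ ^ 2 = 1 := by
    rw [← real_inner_self_eq_norm_sq, EuclideanSpace.inner_toLp_fin3]
    linear_combination hs
  have hnorm3 : ‖WithLp.toLp 2 ![2 * z, 0, √(1 - 4 * z ^ 2)]‖ ^ 2 = 1 := by
    rw [← real_inner_self_eq_norm_sq, EuclideanSpace.inner_toLp_fin3]
    linear_combination ht
  refine ⟨?_, ?_, hcomb, Submodule.starProjection_eq_self_iff.mpr
    (Submodule.mem_span_pair.mpr ⟨_, _, hcomb.symm⟩), ?_, ?_, ?_⟩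
  · rw [Submodule.coe_orthogonalProjectionOnto_apply,
      Submodule.norm_sq_starProjection_span_pair, hnorm2, hnorm3]
    · simp only [EuclideanSpace.inner_toLp_fin3]
      ring
    · rw [hnorm2, hnorm3, EuclideanSpace.inner_toLp_fin3]
      nlinarith
  · have hcont : ContinuousAt (fun w : ℝ => (5 * w ^ 2 - 8 * w ^ 4) / (1 - 4 * w ^ 4)) 0 :=
      ContinuousAt.div (by fun_prop) (by fun_prop) (by norm_num)
    simpa using hcont.tendsto.mono_left nhdsWithin_le_nhds
  all_goals simp only [EuclideanSpace.inner_toLp_fin3]; ring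
end
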